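/- In the setting of the abstract canonical basis lemma, the set {b~ : b in β} of bar-invariant lifts is a Z[v,v^{-1}]-basis of M, a Z[v^{-1}]-basis of L, and a Z-basis of L ∩ bar(L). -/

import Mathlib

/-!
The heart of the matter is a uniqueness statement: if `x ∈ v⁻¹L` and `bar x - x` lies in the span
of the basis vectors indexed by a lower set `D`, then so does `x`. Indeed, at an index `b₀` maximal
in the support of `x` outside `D`, the triangularity of `bar` on `β` shows that the `b₀`-coefficient
of `bar x` is the bar of the `b₀`-coefficient of `x`; so that coefficient is a bar-invariant element
of `v⁻¹ℤ[v⁻¹]`, hence zero. Applied to `x = b~ - b`, this makes `(b~)` unitriangular with respect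
to `β`, so it is linearly independent and, by well-founded induction, spans `L` over `ℤ[v⁻¹]`.
Since the `b~` are bar-invariant, `bar` acts on their coordinates by `v ↦ v⁻¹`, so `L ∩ bar(L)` is
the set of elements whose coordinates lie in `ℤ[v⁻¹] ∩ ℤ[v] = ℤ`.
-/
noncomputable section
set_option synthInstance.maxHeartbeats 1000000
open LaurentPolynomial

/-- `ℤ[v,v⁻¹]` -/
abbrev R := LaurentPolynomial ℤ
/-- `ℤ[v⁻¹]`, as a subalgebra of `ℤ[v,v⁻¹]` (generated by `v⁻¹ = T (-1)`). -/
def Aneg : Subalgebra ℤ R := Algebra.adjoin ℤ {T (-1)}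

variable {β : Type} {M : Type} [AddCommGroup M] [Module R M]

/-- The `ℤ[v⁻¹]`-span `L` of the basis, as the set of elements with coordinates in `ℤ[v⁻¹]`. -/
def Lset (B : Module.Basis β R M) : Set M := {m | ∀ b, B.repr m b ∈ Aneg}

/-- The `ℤ[v⁻¹]`-span of the basis, as an `ℤ[v⁻¹]`-submodule. -/
def Lsub (B : Module.Basis β R M) : Submodule ↥Aneg M := Submodule.span ↥Aneg (Set.range B)

open Submodule Set

theorem wellFoundedLT_of_finite_Iio {ι : Type*} [Preorder ι] (h : ∀ i : ι, (Iio i).Finite) :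
    WellFoundedLT ι :=
  ⟨Subrelation.wf (fun {_ j} hij => ncard_lt_ncard (Iio_ssubset_Iio hij) (h j))
    (measure fun i => (Iio i).ncard).wf⟩

section Basis

variable {ι A E : Type*} [Ring A] [AddCommGroup E] [Module A E]

theorem Module.Basis.exists_restrictScalars_of_span_eq {S : Type*} [CommRing S] [IsDomain S]
    [Nontrivial A] [Algebra S A] [Module S E] [IsScalarTower S A E] [Module.IsTorsionFree S A]
    (b : Module.Basis ι A E) {N : Submodule S E} (h : span S (range b) = N) :
    ∃ b' : Module.Basis ι S N, ∀ i, (b' i : E) = b i :=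
  ⟨(b.restrictScalars S).map (LinearEquiv.ofEq _ _ h), fun i => by simp⟩

theorem Module.Basis.mem_span_image_of_repr_mem {K : Type*} [CommRing K] [Algebra K A]
    [Module K E] [IsScalarTower K A E] (b : Module.Basis ι A E) (S : Subalgebra K A) {m : E}
    {s : Set ι} (hS : ∀ j, b.repr m j ∈ S) (hs : ↑(b.repr m).support ⊆ s) :
    m ∈ span S (b '' s) := by
  rw [← b.linearCombination_repr m, Finsupp.linearCombination_apply]
  exact sum_mem fun j hj =>
    smul_mem (span S (b '' s)) ⟨_, hS j⟩ (subset_span (mem_image_of_mem b (hs hj)))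

variable [PartialOrder ι] (B : Module.Basis ι A E) {v : ι → E}

theorem Module.Basis.repr_apply_eq_single_of_sub_mem_span_Iio {i j : ι}
    (hv : v i - B i ∈ span A (B '' Iio i)) (hj : ¬ j < i) :
    B.repr (v i) j = Finsupp.single i 1 j := by
  have h0 : B.repr (v i - B i) j = 0 :=
    Finsupp.notMem_support_iff.mp fun h => hj (B.mem_span_image.mp hv h)
  rwa [map_sub, Finsupp.sub_apply, sub_eq_zero, B.repr_self] at h0

theorem Module.Basis.linearIndependent_of_sub_mem_span_Iio
    (hv : ∀ i, v i - B i ∈ span A (B '' Iio i)) : LinearIndependent A v := by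
  rw [linearIndependent_iff]
  intro l hl
  by_contra hne
  obtain ⟨i₀, hi₀⟩ := l.support.finite_toSet.exists_maximal
    (Finset.coe_nonempty.mpr (Finsupp.support_nonempty_iff.mpr hne))
  have hcoord : B.repr (Finsupp.linearCombination A v l) i₀ = l i₀ := by
    rw [Finsupp.linearCombination_apply, Finsupp.sum, map_sum, Finsupp.finsetSum_apply,
      Finset.sum_eq_single i₀]
    · rw [map_smul, Finsupp.smul_apply, B.repr_apply_eq_single_of_sub_mem_span_Iio (hv i₀)
        (lt_irrefl _), Finsupp.single_eq_same, smul_eq_mul, mul_one]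
    · intro i hi hne
      rw [map_smul, Finsupp.smul_apply, B.repr_apply_eq_single_of_sub_mem_span_Iio (hv i)
        (hi₀.not_gt hi), Finsupp.single_eq_of_ne' hne, smul_zero]
    · intro h
      rw [Finsupp.notMem_support_iff.mp h, zero_smul, map_zero, Finsupp.zero_apply]
  rw [hl, map_zero, Finsupp.zero_apply] at hcoord
  exact Finsupp.mem_support_iff.mp hi₀.prop hcoord.symm

theorem Module.Basis.span_range_eq_of_sub_mem_span_Iio [WellFoundedLT ι] {K : Type*}
    [CommRing K] [Algebra K A] [Module K E] [IsScalarTower K A E] (S : Subalgebra K A)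
    (hv : ∀ i, v i - B i ∈ span A (B '' Iio i)) (hvS : ∀ i j, B.repr (v i) j ∈ S) :
    span S (range v) = span S (range B) := by
  refine le_antisymm (span_le.mpr <| range_subset_iff.mpr fun i => ?_)
    (span_le.mpr <| range_subset_iff.mpr fun i => ?_)
  · simpa using B.mem_span_image_of_repr_mem S (hvS i) (subset_univ _)
  · induction i using WellFoundedLT.induction with
    | ind i ih =>
      have hS : ∀ j, B.repr (v i - B i) j ∈ S := fun j => by
        classical
        rw [map_sub, Finsupp.sub_apply, B.repr_self, Finsupp.single_apply]
        exact sub_mem (hvS i j) (by split_ifs <;> simp)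
      have hlower : v i - B i ∈ span S (range v) :=
        span_le.mpr (image_subset_iff.mpr fun j hj => ih j hj)
          (B.mem_span_image_of_repr_mem S hS (B.mem_span_image.mp (hv i)))
      simpa using sub_mem (subset_span (mem_range_self i)) hlower

end Basis

theorem coeff_eq_zero_of_mem_Aneg {c : R} (hc : c ∈ Aneg) {n : ℤ} (hn : 0 < n) :
    c.coeff n = 0 := by
  induction hc using Algebra.adjoin_induction generalizing n with
  | mem x hx => rw [mem_singleton_iff.mp hx, T_apply, if_neg (by omega)]
  | algebraMap r => rw [← C_eq_algebraMap, C_apply, if_neg hn.ne']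
  | add x y _ _ hx hy =>
    rw [AddMonoidAlgebra.coeff_add, Finsupp.add_apply, hx hn, hy hn, add_zero]
  | mul x y _ _ hx hy =>
    classical
    rw [AddMonoidAlgebra.coeff_mul]
    refine Finset.sum_eq_zero fun a _ => Finset.sum_eq_zero fun b _ => ?_
    dsimp only
    split_ifs with hab
    · rcases lt_or_ge 0 a with ha | ha
      · rw [hx ha, zero_mul]
      · rw [hy (by omega), mul_zero]
    · rfl

theorem T_neg_one_mul_eq_zero_of_invert_eq {d : R} (hd : d ∈ Aneg)
    (h : invert (T (-1) * d) = T (-1) * d) : T (-1) * d = 0 := by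
  have hnonneg : ∀ n : ℤ, 0 ≤ n → (T (-1) * d).coeff n = 0 := fun n hn => by
    rw [T, AddMonoidAlgebra.coeff_single_mul_apply, one_mul]
    exact coeff_eq_zero_of_mem_Aneg hd (by omega)
  ext n
  rcases le_or_gt 0 n with hn | hn
  · exact hnonneg n hn
  · rw [← h, invert_apply]
    exact hnonneg (-n) (by omega)

theorem mem_Aneg_and_invert_mem_Aneg_iff {c : R} :
    c ∈ Aneg ∧ invert c ∈ Aneg ↔ c ∈ range (algebraMap ℤ R) := by
  constructor
  · rintro ⟨hc, hc'⟩
    refine ⟨c.coeff 0, ?_⟩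
    ext n
    rw [← C_eq_algebraMap, C_apply]
    rcases lt_trichotomy n 0 with hn | rfl | hn
    · have := coeff_eq_zero_of_mem_Aneg hc' (n := -n) (by omega)
      rw [invert_apply, neg_neg] at this
      rw [if_neg hn.ne, this]
    · rw [if_pos rfl]
    · rw [if_neg hn.ne', coeff_eq_zero_of_mem_Aneg hc hn]
  · rintro ⟨z, rfl⟩
    refine ⟨Subalgebra.algebraMap_mem _ z, ?_⟩
    rw [AlgEquiv.commutes]
    exact Subalgebra.algebraMap_mem _ z

section Bar

variable {bar : M →ₗ[ℤ] M}

theorem bar_smul (hbar_v : ∀ (k : ℤ) (m : M), bar ((T k : R) • m) = (T (-k) : R) • bar m)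
    (c : R) (m : M) : bar (c • m) = invert c • bar m := by
  induction c using LaurentPolynomial.induction_on' with
  | add p q hp hq => rw [add_smul, map_add, hp, hq, map_add, add_smul]
  | C_mul_T n a =>
    rw [map_mul, invert_C, invert_T, mul_smul, mul_smul, C_eq_algebraMap, algebraMap_smul,
      algebraMap_smul, map_zsmul, hbar_v]

theorem repr_bar_apply_eq_invert
    (hbar_v : ∀ (k : ℤ) (m : M), bar ((T k : R) • m) = (T (-k) : R) • bar m)
    (B : Module.Basis β R M) {m : M} {j : β}
    (h : ∀ i ∈ (B.repr m).support, B.repr (bar (B i)) j = Finsupp.single i 1 j) :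
    B.repr (bar m) j = invert (B.repr m j) := by
  conv_lhs => rw [← B.linearCombination_repr m]
  rw [Finsupp.linearCombination_apply, Finsupp.sum, map_sum, map_sum, Finsupp.finsetSum_apply,
    Finset.sum_eq_single j]
  · rw [bar_smul hbar_v, map_smul, Finsupp.smul_apply]
    by_cases hj : j ∈ (B.repr m).support
    · rw [h j hj, Finsupp.single_eq_same, smul_eq_mul, mul_one]
    · rw [Finsupp.notMem_support_iff.mp hj, map_zero, zero_smul]
  · intro i hi hne
    rw [bar_smul hbar_v, map_smul, Finsupp.smul_apply, h i hi, Finsupp.single_eq_of_ne' hne,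
      smul_zero]
  · intro hj
    rw [Finsupp.notMem_support_iff.mp hj, zero_smul, map_zero, map_zero, Finsupp.zero_apply]

theorem mem_span_of_bar_sub_mem_span [PartialOrder β]
    (hbar_v : ∀ (k : ℤ) (m : M), bar ((T k : R) • m) = (T (-k) : R) • bar m)
    {B : Module.Basis β R M} (htriang : ∀ b : β, bar (B b) - B b ∈ span R (B '' Iio b))
    {D : Set β} (hD : IsLowerSet D) {y : M} (hy : y ∈ Lset B)
    (h : bar ((T (-1) : R) • y) - (T (-1) : R) • y ∈ span R (B '' D)) :
    (T (-1) : R) • y ∈ span R (B '' D) := by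
  set x := (T (-1) : R) • y
  rw [B.mem_span_image] at h ⊢
  by_contra hx
  obtain ⟨b₀, hb₀⟩ : ∃ b₀, Maximal (· ∈ {b | b ∈ (B.repr x).support ∧ b ∉ D}) b₀ :=
    ((B.repr x).support.finite_toSet.subset fun _ hb => hb.1).exists_maximal (not_subset.mp hx)
  obtain ⟨hb₀x, hb₀D⟩ := hb₀.prop
  have hbar : B.repr (bar x) b₀ = invert (B.repr x b₀) := by
    refine repr_bar_apply_eq_invert hbar_v B fun i hi =>
      B.repr_apply_eq_single_of_sub_mem_span_Iio (v := fun i => bar (B i)) (htriang i)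
        fun hlt => ?_
    by_cases hiD : i ∈ D
    · exact hb₀D (hD hlt.le hiD)
    · exact hb₀.not_gt ⟨hi, hiD⟩ hlt
  have hfix : B.repr (bar x) b₀ = B.repr x b₀ := by
    have := Finsupp.notMem_support_iff.mp fun hb => hb₀D (h hb)
    rwa [map_sub, Finsupp.sub_apply, sub_eq_zero] at this
  have hcoord : B.repr x b₀ = T (-1) * B.repr y b₀ := by
    rw [map_smul, Finsupp.smul_apply, smul_eq_mul]
  apply Finsupp.mem_support_iff.mp hb₀x
  rw [hcoord] at hbar hfix ⊢
  exact T_neg_one_mul_eq_zero_of_invert_eq (hy b₀) (hbar ▸ hfix)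

theorem span_int_range_eq_inf_map_bar (hinv : ∀ m, bar (bar m) = m)
    (hbar_v : ∀ (k : ℤ) (m : M), bar ((T k : R) • m) = (T (-k) : R) • bar m)
    (Bn : Module.Basis β R M) (hBn : ∀ b, bar (Bn b) = Bn b) {L : Submodule Aneg M}
    (hL : span Aneg (range Bn) = L) :
    span ℤ (range Bn) = L.restrictScalars ℤ ⊓ map bar (L.restrictScalars ℤ) := by
  have hmemL : ∀ m, m ∈ L ↔ ∀ i, Bn.repr m i ∈ Aneg := fun m => by
    rw [← hL, Bn.mem_span_iff_repr_mem Aneg, Subalgebra.setRange_algebraMap]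
    rfl
  have hrepr : ∀ m i, Bn.repr (bar m) i = invert (Bn.repr m i) := fun m i =>
    repr_bar_apply_eq_invert hbar_v Bn fun j _ => by rw [hBn, Bn.repr_self]
  ext m
  have hmap : m ∈ map bar (L.restrictScalars ℤ) ↔ bar m ∈ L :=
    ⟨fun ⟨m', hm', h⟩ => by rwa [← h, hinv], fun h => ⟨bar m, h, hinv m⟩⟩
  rw [mem_inf, restrictScalars_mem, hmap, hmemL, hmemL, Bn.mem_span_iff_repr_mem ℤ]
  simp only [hrepr, ← forall_and, mem_Aneg_and_invert_mem_Aneg_iff]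

end Bar

/-- In the abstract canonical basis lemma, the bar-invariant lifts `b~` form a
`ℤ[v,v⁻¹]`-basis of `M`, a `ℤ[v⁻¹]`-basis of `L`, and a `ℤ`-basis of `L ∩ bar(L)`. -/
theorem canonical_basis_lemma_bases [PartialOrder β]
    (hfin : ∀ b : β, {b' | b' < b}.Finite)
    (B : Module.Basis β R M)
    (bar : M →ₗ[ℤ] M)
    (hinv : ∀ m, bar (bar m) = m)
    (hbar_v : ∀ (k : ℤ) (m : M), bar ((T k : R) • m) = (T (-k) : R) • bar m)
    (htriang : ∀ b : β, bar (B b) - B b ∈ Submodule.span R (B '' {b' | b' < b}))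
    (bt : β → M)
    (hbt : ∀ b : β, bt b ∈ Lset B ∧ bar (bt b) = bt b ∧
      ∃ y ∈ Lset B, bt b - B b = (T (-1) : R) • y) :
    (∃ Bn : Module.Basis β R M, ∀ b, Bn b = bt b) ∧
    (∃ BL : Module.Basis β ↥Aneg ↥(Lsub B), ∀ b, (BL b : M) = bt b) ∧
    (∃ BZ : Module.Basis β ℤ
        ↥(((Lsub B).restrictScalars ℤ) ⊓ Submodule.map bar ((Lsub B).restrictScalars ℤ)),
      ∀ b, (BZ b : M) = bt b) := by
  have : WellFoundedLT β := wellFoundedLT_of_finite_Iio hfin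
  have hunitri : ∀ b, bt b - B b ∈ span R (B '' Iio b) := fun b => by
    obtain ⟨-, hbar, y, hy, hxy⟩ := hbt b
    rw [hxy]
    refine mem_span_of_bar_sub_mem_span hbar_v htriang (isLowerSet_Iio b) hy ?_
    rw [← hxy, map_sub, hbar, sub_sub_sub_cancel_left, ← neg_sub]
    exact neg_mem (htriang b)
  have hspanL : span Aneg (range bt) = Lsub B :=
    B.span_range_eq_of_sub_mem_span_Iio Aneg hunitri fun b => (hbt b).1
  have hspanR : ⊤ ≤ span R (range bt) := by
    rw [← B.span_eq, span_le]
    exact fun m hm => span_le_restrictScalars Aneg R _ (hspanL ▸ subset_span hm)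
  let Bn := Module.Basis.mk (B.linearIndependent_of_sub_mem_span_Iio hunitri) hspanR
  have hBn : ⇑Bn = bt := Module.Basis.coe_mk _ _
  obtain ⟨BL, hBL⟩ := Bn.exists_restrictScalars_of_span_eq (hBn ▸ hspanL)
  obtain ⟨BZ, hBZ⟩ := Bn.exists_restrictScalars_of_span_eq <|
    span_int_range_eq_inf_map_bar hinv hbar_v Bn (hBn ▸ fun b => (hbt b).2.1) (hBn ▸ hspanL)
  exact ⟨⟨Bn, congrFun hBn⟩, ⟨BL, fun b => (hBL b).trans (congrFun hBn b)⟩,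
    ⟨BZ, fun b => (hBZ b).trans (congrFun hBn b)⟩⟩
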